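/- arXiv:1904.08723 — 2 statements merged into one kernel-verified Lean document; each statement's English description precedes it below -/
import Mathlib

section
/- For any u_0 > 0 and V > 0 there exists a positive constant c_0 depending only on u_0 and V with the following property: for every n, every real symmetric n×n matrix X, every z = u + iv with 0 < v ≤ V and |u| ≤ u_0, and every j ∈ {1,…,n}, one has |R_{jj}(z)| ≤ c_0 (1 + |T_n(z)|^{1/2} |R_{jj}(z)| + |ε_j(z)| |R_{jj}(z)|), where R is the resolvent of W = n^{-1/2} X. -/
/-!
The Schur complement formula for the diagonal entry gives
`1 / R_jj = W_jj - z - ∑_{k,l ≠ j} W_jk R^{(j)}_kl W_lj = ε_j - z - m_n` with `m_n = n⁻¹ Tr R`,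
once the quadratic form is split into its off-diagonal part, its diagonal part and the trace
correction `ε_{4j}`. Averaging `ε_j R_jj = 1 + (z + m_n) R_jj` over `j` gives
`T_n = 1 + (z + m_n) m_n`, so `|z + m_n|` and `|T_n|^{1/2}` cannot both be small:
`1 ≤ (|z| + 2) (|z + m_n| + |T_n|^{1/2})`. Combined with
`|z + m_n| |R_jj| = |ε_j R_jj - 1| ≤ 1 + |ε_j| |R_jj|` this is the bound with `c₀ = u₀ + V + 2`.
-/

open MeasureTheory ProbabilityTheory Matrix Finset

namespace LocalSemicircleLaw

/-- The resolvent `(A - z I)⁻¹` of a real matrix, viewed as a complex matrix. -/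
noncomputable def resolv {m : Type*} [Fintype m] [DecidableEq m]
    (A : Matrix m m ℝ) (z : ℂ) : Matrix m m ℂ :=
  (A.map (fun x : ℝ => (x : ℂ)) - z • (1 : Matrix m m ℂ))⁻¹

/-- The normalized matrix `W = n^{-1/2} X`. -/
noncomputable def Wmat {n : ℕ} (X : Matrix (Fin n) (Fin n) ℝ) : Matrix (Fin n) (Fin n) ℝ :=
  (Real.sqrt n)⁻¹ • X

/-- The Stieltjes transform `m_n(z) = n⁻¹ Tr (W - z)⁻¹` of the empirical spectral
distribution of `W = n^{-1/2} X`. -/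
noncomputable def mn {n : ℕ} (X : Matrix (Fin n) (Fin n) ℝ) (z : ℂ) : ℂ :=
  (n : ℂ)⁻¹ * (resolv (Wmat X) z).trace

/-- The resolvent of the submatrix `W^{(j)}` of `W = n^{-1/2} X` obtained by deleting
row and column `j`. -/
noncomputable def subResolv {n : ℕ} (X : Matrix (Fin n) (Fin n) ℝ) (j : Fin n) (z : ℂ) :
    Matrix {k : Fin n // k ≠ j} {k : Fin n // k ≠ j} ℂ :=
  resolv ((Wmat X).submatrix (fun k : {k : Fin n // k ≠ j} => (k : Fin n))
    (fun k : {k : Fin n // k ≠ j} => (k : Fin n))) z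

/-- `ε_{1j} = X_{jj}/√n`. -/
noncomputable def eps1 {n : ℕ} (X : Matrix (Fin n) (Fin n) ℝ) (j : Fin n) : ℂ :=
  (X j j : ℂ) / (Real.sqrt n : ℂ)

/-- `ε_{2j} = -n⁻¹ ∑_{l ≠ k ∈ T_j} X_{jk} X_{jl} R^{(j)}_{kl}`. -/
noncomputable def eps2 {n : ℕ} (X : Matrix (Fin n) (Fin n) ℝ) (j : Fin n) (z : ℂ) : ℂ :=
  -(n : ℂ)⁻¹ * ∑ k : {k : Fin n // k ≠ j}, ∑ l : {l : Fin n // l ≠ j},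
    if k ≠ l then (X j (k : Fin n) : ℂ) * (X j (l : Fin n) : ℂ) * subResolv X j z k l else 0

/-- `ε_{3j} = -n⁻¹ ∑_{k ∈ T_j} (X_{jk}² - 1) R^{(j)}_{kk}`. -/
noncomputable def eps3 {n : ℕ} (X : Matrix (Fin n) (Fin n) ℝ) (j : Fin n) (z : ℂ) : ℂ :=
  -(n : ℂ)⁻¹ * ∑ k : {k : Fin n // k ≠ j},
    ((X j (k : Fin n) : ℂ) ^ 2 - 1) * subResolv X j z k k

/-- `ε_{4j} = n⁻¹ (Tr R - Tr R^{(j)})`. -/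
noncomputable def eps4 {n : ℕ} (X : Matrix (Fin n) (Fin n) ℝ) (j : Fin n) (z : ℂ) : ℂ :=
  (n : ℂ)⁻¹ * ((resolv (Wmat X) z).trace - (subResolv X j z).trace)

/-- `ε_j = ε_{1j} + ε_{2j} + ε_{3j} + ε_{4j}`. -/
noncomputable def epsTot {n : ℕ} (X : Matrix (Fin n) (Fin n) ℝ) (j : Fin n) (z : ℂ) : ℂ :=
  eps1 X j + eps2 X j z + eps3 X j z + eps4 X j z

/-- `T_n = n⁻¹ ∑_j ε_j R_{jj}`. -/
noncomputable def Tn {n : ℕ} (X : Matrix (Fin n) (Fin n) ℝ) (z : ℂ) : ℂ :=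
  (n : ℂ)⁻¹ * ∑ j : Fin n, epsTot X j z * resolv (Wmat X) z j j

end LocalSemicircleLaw

open ComplexOrder in
theorem Matrix.IsHermitian.isUnit_det_sub_smul_one {m : Type*} [Fintype m] [DecidableEq m]
    {A : Matrix m m ℂ} (hA : A.IsHermitian) {z : ℂ} (hz : z.im ≠ 0) : IsUnit (A - z • 1).det := by
  rw [isUnit_iff_ne_zero]
  intro hdet
  obtain ⟨x, hx, hAx⟩ := exists_mulVec_eq_zero_iff.mpr hdet
  rw [sub_mulVec, smul_mulVec, one_mulVec, sub_eq_zero] at hAx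
  obtain ⟨hre, him⟩ := Complex.pos_iff.mp (dotProduct_star_self_pos_iff.mpr hx)
  have h := hA.im_star_dotProduct_mulVec_self x
  rw [hAx, dotProduct_smul, smul_eq_mul, RCLike.im_to_complex, Complex.mul_im, ← him,
    mul_zero, zero_add] at h
  exact hz ((mul_eq_zero.mp h).resolve_right hre.ne')

theorem Matrix.IsSymm.isHermitian_map_ofReal {m : Type*} {A : Matrix m m ℝ} (hA : A.IsSymm) :
    (A.map ((↑) : ℝ → ℂ)).IsHermitian :=
  (isHermitian_iff_isSymm.mpr hA).map _ fun _ => (Complex.conj_ofReal _).symm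

theorem Matrix.schurComplement_mul_inv_apply_self {ι K : Type*} [Fintype ι]
    [DecidableEq ι] [Field K] (M : Matrix ι ι K) (j : ι) (hM : IsUnit M.det)
    (hMj : IsUnit (M.submatrix Subtype.val Subtype.val : Matrix {k // k ≠ j} {k // k ≠ j} K).det) :
    (M j j - ∑ k : {k // k ≠ j}, ∑ l : {l // l ≠ j},
      M j k * (M.submatrix Subtype.val Subtype.val)⁻¹ k l * M l j) * M⁻¹ j j = 1 := by
  set N : Matrix {k // k ≠ j} {k // k ≠ j} K := M.submatrix Subtype.val Subtype.val
  set S := M j j - ∑ k : {k // k ≠ j}, ∑ l : {l // l ≠ j}, M j k * N⁻¹ k l * M l j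
  set y := N⁻¹ *ᵥ fun l => M l j
  -- `x` solves `M x = S eⱼ` with `xⱼ = 1`; the `j`-th coordinate of `x = S M⁻¹ eⱼ` is the claim.
  let x : ι → K := fun i => if h : i = j then 1 else -y ⟨i, h⟩
  have hxj : x j = 1 := dif_pos rfl
  have hxk (k : {k // k ≠ j}) : x k = -y k := dif_neg k.2
  have hMx : M *ᵥ x = S • Pi.single j 1 := by
    ext i
    have hrow : (M *ᵥ x) i = M i j - ∑ k : {k // k ≠ j}, M i k * y k := by
      simp only [mulVec, dotProduct, Fintype.sum_eq_add_sum_subtype_ne _ j, hxj, hxk, mul_one,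
        mul_neg, sum_neg_distrib, sub_eq_add_neg]
    rw [hrow]
    by_cases hij : i = j
    · subst hij
      simp only [Pi.smul_apply, Pi.single_eq_same, smul_eq_mul, mul_one, S, y, mulVec,
        dotProduct, mul_sum, mul_assoc]
    · have hNy : ∑ k : {k // k ≠ j}, M i k * y k = (N *ᵥ y) ⟨i, hij⟩ := rfl
      rw [hNy, mulVec_mulVec, mul_nonsing_inv N hMj, one_mulVec, Pi.smul_apply,
        Pi.single_eq_of_ne hij, smul_zero, sub_self]
  have hx : x = S • M⁻¹ *ᵥ Pi.single j 1 := by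
    rw [← mulVec_smul, ← hMx, mulVec_mulVec, nonsing_inv_mul M hM, one_mulVec]
  simpa only [hxj, mulVec_single_one, Pi.smul_apply, col_apply, smul_eq_mul, eq_comm]
    using congrFun hx j

theorem Finset.sum_sum_eq_sum_sum_ite_ne_add_sum {α M : Type*} [Fintype α] [DecidableEq α]
    [AddCommMonoid M] (f : α → α → M) :
    ∑ k, ∑ l, f k l = ∑ k, ∑ l, (if k ≠ l then f k l else 0) + ∑ k, f k k := by
  rw [← sum_add_distrib]
  refine sum_congr rfl fun k _ => ?_
  rw [sum_ite, sum_const_zero, add_zero, filter_ne, sum_erase_add _ _ (mem_univ k)]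

theorem Complex.one_le_mul_norm_add_add_sqrt_norm_one_add_mul {z m : ℂ} {K : ℝ} (hz : ‖z‖ ≤ K) :
    1 ≤ (K + 2) * (‖z + m‖ + √‖1 + (z + m) * m‖) := by
  set a := ‖z + m‖
  set t := ‖1 + (z + m) * m‖
  have hm : ‖m‖ ≤ a + K := by
    calc ‖m‖ = ‖(z + m) - z‖ := by rw [add_sub_cancel_left]
      _ ≤ a + K := (norm_sub_le _ _).trans (by gcongr)
  have h1 : 1 ≤ t + a * (a + K) := by
    calc (1 : ℝ) = ‖(1 + (z + m) * m) - (z + m) * m‖ := by rw [add_sub_cancel_right, norm_one]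
      _ ≤ t + a * ‖m‖ := (norm_sub_le _ _).trans_eq (by rw [norm_mul])
      _ ≤ t + a * (a + K) := by gcongr
  have hK : 0 ≤ K := (norm_nonneg z).trans hz
  have ht : √t ^ 2 = t := Real.sq_sqrt (norm_nonneg _)
  have ha : 0 ≤ a := norm_nonneg _
  have hs : 0 ≤ √t := Real.sqrt_nonneg t
  -- if `s := a + √t < 1` then `t ≤ s² ≤ s` and `a ≤ s`, so `1 ≤ t + a (a + K) ≤ (K + 2) s`
  by_cases hs1 : 1 ≤ a + √t
  · nlinarith
  · nlinarith

namespace LocalSemicircleLaw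

variable {n : ℕ} {X : Matrix (Fin n) (Fin n) ℝ}

theorem Wmat_map_sub_smul_one_apply_of_ne (z : ℂ) {i k : Fin n} (hik : i ≠ k) :
    ((Wmat X).map ((↑) : ℝ → ℂ) - z • 1) i k = X i k / Real.sqrt n := by
  simp [Wmat, one_apply_ne hik, div_eq_inv_mul]

theorem Wmat_map_sub_smul_one_apply_self (z : ℂ) (j : Fin n) :
    ((Wmat X).map ((↑) : ℝ → ℂ) - z • 1) j j = eps1 X j - z := by
  simp [Wmat, eps1, div_eq_inv_mul]

theorem epsTot_sub_sub_mn (hX : X.IsSymm) (j : Fin n) (z : ℂ) :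
    epsTot X j z - z - mn X z =
      ((Wmat X).map ((↑) : ℝ → ℂ) - z • 1) j j - ∑ k : {k // k ≠ j}, ∑ l : {l // l ≠ j},
        ((Wmat X).map ((↑) : ℝ → ℂ) - z • 1) j k * subResolv X j z k l *
          ((Wmat X).map ((↑) : ℝ → ℂ) - z • 1) l j := by
  have hs : (Real.sqrt n : ℂ)⁻¹ ^ 2 = (n : ℂ)⁻¹ := by
    rw [inv_pow, ← Complex.ofReal_pow, Real.sq_sqrt n.cast_nonneg, Complex.ofReal_natCast]
  have hterm (k l : {k // k ≠ j}) :
      ((Wmat X).map ((↑) : ℝ → ℂ) - z • 1) j k * subResolv X j z k l *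
          ((Wmat X).map ((↑) : ℝ → ℂ) - z • 1) l j =
        (n : ℂ)⁻¹ * ((X j k : ℂ) * X j l * subResolv X j z k l) := by
    rw [Wmat_map_sub_smul_one_apply_of_ne z (Ne.symm k.2), Wmat_map_sub_smul_one_apply_of_ne z l.2,
      hX.apply j l, ← hs]
    ring
  simp only [hterm, ← mul_sum, Wmat_map_sub_smul_one_apply_self, epsTot, eps2, eps3, eps4, mn,
    trace, Matrix.diag, pow_two, sub_mul, sum_sub_distrib, one_mul]
  rw [sum_sum_eq_sum_sum_ite_ne_add_sum fun k l : {k // k ≠ j} =>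
    (X j k : ℂ) * X j l * subResolv X j z k l]
  ring

theorem epsTot_sub_sub_mn_mul_resolv_apply_self (hX : X.IsSymm) {z : ℂ} (hz : z.im ≠ 0)
    (j : Fin n) : (epsTot X j z - z - mn X z) * resolv (Wmat X) z j j = 1 := by
  have hW : (Wmat X).IsSymm := hX.smul _
  have hsub : ((Wmat X).map ((↑) : ℝ → ℂ) - z • 1).submatrix Subtype.val Subtype.val =
      ((Wmat X).submatrix (Subtype.val : {k // k ≠ j} → Fin n)
        (Subtype.val : {k // k ≠ j} → Fin n)).map (↑) - z • 1 := by
    ext k l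
    simp [one_apply, Subtype.ext_iff]
  have hWj := (hW.submatrix (Subtype.val : {k // k ≠ j} → Fin n)).isHermitian_map_ofReal
  have key := schurComplement_mul_inv_apply_self _ j
    (hW.isHermitian_map_ofReal.isUnit_det_sub_smul_one hz)
    (hsub ▸ hWj.isUnit_det_sub_smul_one hz)
  rw [hsub] at key
  rwa [epsTot_sub_sub_mn hX]

theorem Tn_eq_one_add_add_mn_mul_mn (hX : X.IsSymm) {z : ℂ} (hz : z.im ≠ 0) (hn : n ≠ 0) :
    Tn X z = 1 + (z + mn X z) * mn X z := by
  have hterm (j : Fin n) : epsTot X j z * resolv (Wmat X) z j j =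
      1 + (z + mn X z) * resolv (Wmat X) z j j := by
    linear_combination epsTot_sub_sub_mn_mul_resolv_apply_self hX hz j
  have htrace : ∑ j, resolv (Wmat X) z j j = n * mn X z := by
    rw [mn, ← mul_assoc, mul_inv_cancel₀ (Nat.cast_ne_zero.mpr hn), one_mul]
    rfl
  rw [Tn, sum_congr rfl fun j _ => hterm j, sum_add_distrib, ← mul_sum, htrace]
  simp only [sum_const, card_univ, Fintype.card_fin, nsmul_eq_mul, mul_one]
  field_simp

/-- **Recursive bound for diagonal resolvent entries** (Lemma 3.3).  For any
`u₀, V > 0` there is `c₀ > 0` depending only on `u₀` and `V` such that for every real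
symmetric `n × n` matrix `X`, every `z = u + iv` with `0 < v ≤ V` and `|u| ≤ u₀`, and
every `j`, one has
`|R_{jj}| ≤ c₀ (1 + |T_n|^{1/2} |R_{jj}| + |ε_j| |R_{jj}|)`. -/
theorem diag_resolvent_recursive_bound
    (u₀ V : ℝ) (hu₀pos : 0 < u₀) (hVpos : 0 < V) :
    ∃ c₀ : ℝ, 0 < c₀ ∧
      ∀ (n : ℕ) (X : Matrix (Fin n) (Fin n) ℝ), X.IsSymm →
        ∀ (u v : ℝ), 0 < v → v ≤ V → |u| ≤ u₀ →
          ∀ j : Fin n,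
            ‖resolv (Wmat X) (u + v * Complex.I) j j‖
              ≤ c₀ * (1
                + Real.sqrt ‖Tn X (u + v * Complex.I)‖
                    * ‖resolv (Wmat X) (u + v * Complex.I) j j‖
                + ‖epsTot X j (u + v * Complex.I)‖
                    * ‖resolv (Wmat X) (u + v * Complex.I) j j‖) := by
  refine ⟨u₀ + V + 2, by positivity, fun n X hX u v hv hvV hu j => ?_⟩
  set z : ℂ := u + v * Complex.I
  set R := resolv (Wmat X) z j j
  have hz : z.im ≠ 0 := by simpa [z] using hv.ne'
  have hzK : ‖z‖ ≤ u₀ + V := by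
    calc ‖z‖ ≤ |u| + |v| := by simpa [z] using norm_add_le (u : ℂ) (v * Complex.I)
      _ ≤ u₀ + V := by rw [abs_of_pos hv]; gcongr
  have hzm : ‖z + mn X z‖ * ‖R‖ ≤ 1 + ‖epsTot X j z‖ * ‖R‖ := by
    have hschur : (epsTot X j z - z - mn X z) * R = 1 :=
      epsTot_sub_sub_mn_mul_resolv_apply_self hX hz j
    calc ‖z + mn X z‖ * ‖R‖ = ‖epsTot X j z * R - 1‖ := by
          rw [← norm_mul]; congr 1; linear_combination -hschur
      _ ≤ 1 + ‖epsTot X j z‖ * ‖R‖ := by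
          rw [add_comm, ← norm_mul, ← norm_one (α := ℂ)]; exact norm_sub_le _ _
  rw [Tn_eq_one_add_add_mn_mul_mn hX hz (Fin.pos j).ne']
  calc ‖R‖ ≤ ‖R‖ * ((u₀ + V + 2) * (‖z + mn X z‖ + √‖1 + (z + mn X z) * mn X z‖)) :=
        le_mul_of_one_le_right (norm_nonneg R)
          (Complex.one_le_mul_norm_add_add_sqrt_norm_one_add_mul hzK)
    _ = (u₀ + V + 2) * (√‖1 + (z + mn X z) * mn X z‖ * ‖R‖ + ‖z + mn X z‖ * ‖R‖) := by ring
    _ ≤ _ := mul_le_mul_of_nonneg_left (by linarith) (by positivity)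

end LocalSemicircleLaw
end

section
/- Let n ≥ 2 and r ≥ 2 be integers and R̲ > 0, and let L = [L_{jk}]_{j,k=1}^n be a random symmetric 0/1 matrix whose upper-triangular entries L_{jk}, 1 ≤ j ≤ k ≤ n, are independent with P(L_{jk} = 0) ≤ 1/(n R̲^4). Call indices j and k linked if L_{jk} = 0, and call j, k connected if there is a finite sequence j = j_1, j_2, …, j_l = k with j_ν linked to j_{ν+1} for each ν. Then the probability that there exist r distinct indices j_1, …, j_r ∈ {1,…,n} that are pairwise connected is at most e^{3r} n r^{-1} R̲^{-4(r−1)}. -/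
open MeasureTheory ProbabilityTheory Finset

/-!
Suppose `r` indices are pairwise connected. Growing a tree inside their component one vertex at a
time, and sending each new vertex to its neighbour in the tree, gives a set `t` of `r` indices
and a map `f : t → t` whose `r - 1` edges `{x, f x}` (`f x ≠ x`) are distinct links. There are at
most `C(n, r) r^r` such pairs `(t, f)`, and by independence all edges of a fixed one are links
with probability at most `(n R̲⁴)^{-(r-1)}`. The union bound and
`C(n, r) r^r ≤ n^r r^r / r! ≤ n^r e^r ≤ n^r e^{3r} / r` finish the proof.
-/

theorem Relation.ReflTransGen.exists_rel_of_notMem_of_mem {α : Type*} {rel : α → α → Prop}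
    {S : Set α} {a b : α} (h : ReflTransGen rel a b) (ha : a ∉ S) (hb : b ∈ S) :
    ∃ x ∉ S, ∃ y ∈ S, rel x y := by
  induction h using Relation.ReflTransGen.head_induction_on with
  | refl => exact absurd hb ha
  | @head u c huc _ ih =>
    by_cases hc : c ∈ S
    · exact ⟨u, ha, c, hc, huc⟩
    · exact ih hc

section FunctionalEdges

variable {α : Type*} [DecidableEq α]

def functionalEdges (t : Finset α) (f : α → α) : Finset (Sym2 α) :=
  {e ∈ t.image fun x => s(x, f x) | ¬e.IsDiag}

theorem mem_functionalEdges {t : Finset α} {f : α → α} {e : Sym2 α} :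
    e ∈ functionalEdges t f ↔ ∃ x ∈ t, f x ≠ x ∧ s(x, f x) = e := by
  simp only [functionalEdges, mem_filter, mem_image]
  constructor
  · rintro ⟨⟨x, hx, rfl⟩, hd⟩
    exact ⟨x, hx, fun h => hd (by simp [h]), rfl⟩
  · rintro ⟨x, hx, hfx, rfl⟩
    exact ⟨⟨x, hx, rfl⟩, by simpa [eq_comm] using hfx⟩

theorem functionalEdges_insert_update {t : Finset α} {f : α → α}
    {x y : α} (hx : x ∉ t) (hy : y ∈ t) :
    functionalEdges (insert x t) (Function.update f x y) =
      insert s(x, y) (functionalEdges t f) := by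
  have hyx : y ≠ x := fun h => hx (h ▸ hy)
  have hupd : ∀ z ∈ t, Function.update f x y z = f z := fun z hz =>
    Function.update_of_ne (by rintro rfl; exact hx hz) _ _
  ext e
  rw [mem_insert, mem_functionalEdges, mem_functionalEdges, exists_mem_insert,
    Function.update_self, eq_comm (a := e)]
  simp only [hyx, ne_eq, not_false_eq_true, true_and]
  refine or_congr_right (exists_congr fun z => and_congr_right fun hz => ?_)
  rw [hupd z hz]

theorem card_functionalEdges_insert_update {t : Finset α} {f : α → α} (hf : Set.MapsTo f t t)
    {x y : α} (hx : x ∉ t) (hy : y ∈ t) :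
    (functionalEdges (insert x t) (Function.update f x y)).card =
      (functionalEdges t f).card + 1 := by
  rw [functionalEdges_insert_update hx hy, card_insert_of_notMem]
  rw [mem_functionalEdges]
  rintro ⟨z, hz, -, hze⟩
  rcases Sym2.eq_iff.mp hze with ⟨rfl, -⟩ | ⟨-, hzx⟩
  · exact hx hz
  · exact hx (hzx ▸ hf hz)

theorem exists_functionalEdges_card_eq {rel : α → α → Prop} {s : Finset α} {a : α}
    (hs : ∀ j ∈ s, Relation.ReflTransGen rel j a) {r : ℕ} (hr : 1 ≤ r) (hrs : r ≤ s.card) :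
    ∃ t : Finset α, ∃ f : α → α, a ∈ t ∧ t.card = r ∧ Set.MapsTo f t t ∧
      (∀ x ∈ t, f x ≠ x → rel x (f x)) ∧ (functionalEdges t f).card = r - 1 := by
  induction r, hr using Nat.le_induction with
  | base => exact ⟨{a}, id, mem_singleton_self a, card_singleton a, fun _ => id,
      fun _ _ h => absurd rfl h, by simp [functionalEdges]⟩
  | succ k hk ih =>
    obtain ⟨t, f, hat, hcard, hf, hrel, hedges⟩ := ih (by omega)
    obtain ⟨w, hws, hwt⟩ := exists_mem_notMem_of_card_lt_card (s := t) (t := s) (by omega)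
    obtain ⟨x, hx, y, hy, hxy⟩ :=
      (hs w hws).exists_rel_of_notMem_of_mem (S := ↑t) hwt (mem_coe.mpr hat)
    rw [mem_coe] at hx hy
    have hupd : ∀ z ∈ t, Function.update f x y z = f z := fun z hz =>
      Function.update_of_ne (by rintro rfl; exact hx hz) _ _
    refine ⟨insert x t, Function.update f x y, mem_insert_of_mem hat,
      by rw [card_insert_of_notMem hx, hcard], ?_, ?_,
      by rw [card_functionalEdges_insert_update hf hx hy, hedges]; omega⟩
    · intro z hz
      rcases mem_insert.mp hz with rfl | hz
      · simpa using mem_insert_of_mem hy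
      · simpa [hupd z hz] using mem_insert_of_mem (hf hz)
    · intro z hz hfz
      rcases mem_insert.mp hz with rfl | hz
      · simpa using hxy
      · rw [hupd z hz] at hfz ⊢
        exact hrel z hz hfz

theorem functionalEdges_congr {t : Finset α} {f g : α → α} (h : ∀ x ∈ t, f x = g x) :
    functionalEdges t f = functionalEdges t g := by
  rw [functionalEdges, functionalEdges, image_congr fun x hx => by rw [h x hx]]

variable (α) in
noncomputable def functionalEdgeSets [Fintype α] (r : ℕ) : Finset (Finset (Sym2 α)) :=
  (powersetCard r univ).biUnion fun t =>
    univ.image fun φ : t → t =>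
      functionalEdges t (Function.extend Subtype.val (Subtype.val ∘ φ) id)

theorem functionalEdges_mem_functionalEdgeSets [Fintype α] {t : Finset α} {f : α → α} {r : ℕ}
    (ht : t.card = r) (hf : Set.MapsTo f t t) : functionalEdges t f ∈ functionalEdgeSets α r := by
  refine mem_biUnion.mpr ⟨t, mem_powersetCard.mpr ⟨subset_univ t, ht⟩,
    mem_image.mpr ⟨hf.restrict, mem_univ _, functionalEdges_congr fun x hx => ?_⟩⟩
  exact Subtype.val_injective.extend_apply _ _ ⟨x, hx⟩

theorem card_functionalEdgeSets_le [Fintype α] (r : ℕ) :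
    (functionalEdgeSets α r).card ≤ (Fintype.card α).choose r * r ^ r := by
  calc (functionalEdgeSets α r).card
      ≤ ∑ t ∈ powersetCard r (univ : Finset α), r ^ r := by
        refine card_biUnion_le.trans (sum_le_sum fun t ht => card_image_le.trans ?_)
        rw [card_univ, Fintype.card_fun, Fintype.card_coe, (mem_powersetCard.mp ht).2]
    _ = (Fintype.card α).choose r * r ^ r := by
        rw [sum_const, card_powersetCard, card_univ, smul_eq_mul]

theorem exists_mem_functionalEdgeSets_of_reflTransGen [Fintype α] {rel : α → α → Prop}
    (hsymm : ∀ x y, rel x y → rel y x) {s : Finset α}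
    (hs : ∀ j ∈ s, ∀ k ∈ s, Relation.ReflTransGen rel j k) {r : ℕ} (hr : 1 ≤ r)
    (hsr : s.card = r) :
    ∃ E ∈ functionalEdgeSets α r, E.card = r - 1 ∧ ∀ x y, s(x, y) ∈ E → rel x y := by
  obtain ⟨a, ha⟩ : s.Nonempty := card_pos.mp (by omega)
  obtain ⟨t, f, -, ht, hf, hrel, hE⟩ :=
    exists_functionalEdges_card_eq (fun j hj => hs j hj a ha) hr hsr.ge
  refine ⟨_, functionalEdges_mem_functionalEdgeSets ht hf, hE, fun x y hxy => ?_⟩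
  obtain ⟨z, hz, hfz, hzxy⟩ := mem_functionalEdges.mp hxy
  rcases Sym2.eq_iff.mp hzxy with ⟨rfl, rfl⟩ | ⟨rfl, rfl⟩
  · exact hrel z hz hfz
  · exact hsymm _ _ (hrel z hz hfz)

end FunctionalEdges

theorem ProbabilityTheory.iIndepFun.measure_biInter_preimage_le_pow {ι Ω β : Type*}
    {_ : MeasurableSpace Ω} [MeasurableSpace β] {μ : Measure Ω} {X : ι → Ω → β}
    (hX : iIndepFun X μ) {B : Set β} (hB : MeasurableSet B) {p : ENNReal}
    (hp : ∀ i, μ (X i ⁻¹' B) ≤ p) (t : Finset ι) :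
    μ (⋂ i ∈ t, X i ⁻¹' B) ≤ p ^ t.card := by
  rw [hX.meas_biInter fun i _ => ⟨B, hB, rfl⟩]
  exact prod_le_pow_card _ _ _ fun i _ => hp i

theorem MeasureTheory.measure_biUnion_biInter_le_card_mul_pow {Ω ι : Type*}
    {_ : MeasurableSpace Ω} {μ : Measure Ω} {A : ι → Set Ω} {p : ENNReal}
    (hA : ∀ E : Finset ι, μ (⋂ i ∈ E, A i) ≤ p ^ E.card) (𝓔 : Finset (Finset ι)) {m : ℕ}
    (h𝓔 : ∀ E ∈ 𝓔, E.card = m) :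
    μ (⋃ E ∈ 𝓔, ⋂ i ∈ E, A i) ≤ 𝓔.card * p ^ m :=
  calc μ (⋃ E ∈ 𝓔, ⋂ i ∈ E, A i)
      ≤ ∑ E ∈ 𝓔, μ (⋂ i ∈ E, A i) := measure_biUnion_finset_le _ _
    _ ≤ ∑ _E ∈ 𝓔, p ^ m := sum_le_sum fun E hE => h𝓔 E hE ▸ hA E
    _ = 𝓔.card * p ^ m := by rw [sum_const, nsmul_eq_mul]

theorem Real.mul_exp_le_exp_three_mul {x : ℝ} (hx : 0 ≤ x) :
    x * Real.exp x ≤ Real.exp (3 * x) := by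
  have hx2 : x ≤ Real.exp (2 * x) := by linarith [Real.add_one_le_exp (2 * x)]
  calc x * Real.exp x ≤ Real.exp (2 * x) * Real.exp x := by gcongr
    _ = Real.exp (3 * x) := by rw [← Real.exp_add]; ring_nf

theorem Nat.choose_mul_pow_self_le_pow_mul_exp (n r : ℕ) :
    (n.choose r * r ^ r : ℝ) ≤ n ^ r * Real.exp r := by
  calc (n.choose r * r ^ r : ℝ) ≤ n ^ r / r.factorial * r ^ r := by
        gcongr; exact Nat.choose_le_pow_div r n
    _ = n ^ r * (r ^ r / r.factorial) := by ring
    _ ≤ n ^ r * Real.exp r := by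
        gcongr; exact Real.pow_div_factorial_le_exp _ (Nat.cast_nonneg r) r

theorem Nat.choose_mul_pow_self_mul_inv_pow_le {n r : ℕ} (hr : 1 ≤ r) {c : ℝ} (hc : 0 ≤ c) :
    (n.choose r * r ^ r : ℝ) * (1 / (n * c)) ^ (r - 1) ≤
      Real.exp (3 * r) * n * (r : ℝ)⁻¹ * (c ^ (r - 1))⁻¹ := by
  have hr0 : (0 : ℝ) < r := by exact_mod_cast hr
  have hpow : (n : ℝ) ^ r * (1 / (n * c)) ^ (r - 1) = n * (c ^ (r - 1))⁻¹ := by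
    obtain ⟨m, rfl⟩ : ∃ m, r = m + 1 := ⟨r - 1, by omega⟩
    rcases eq_or_ne (n : ℝ) 0 with hn | hn
    · simp [hn]
    · rw [Nat.add_sub_cancel, one_div, mul_inv, mul_pow, inv_pow, inv_pow, pow_succ]
      field_simp
  have hexp : Real.exp r ≤ Real.exp (3 * r) * (r : ℝ)⁻¹ := by
    rw [le_mul_inv_iff₀ hr0, mul_comm]
    exact Real.mul_exp_le_exp_three_mul hr0.le
  calc (n.choose r * r ^ r : ℝ) * (1 / (n * c)) ^ (r - 1)
      ≤ n ^ r * Real.exp r * (1 / (n * c)) ^ (r - 1) :=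
        mul_le_mul_of_nonneg_right (Nat.choose_mul_pow_self_le_pow_mul_exp n r) (by positivity)
    _ = Real.exp r * (n * (c ^ (r - 1))⁻¹) := by rw [← hpow]; ring
    _ ≤ Real.exp (3 * r) * (r : ℝ)⁻¹ * (n * (c ^ (r - 1))⁻¹) := by gcongr
    _ = Real.exp (3 * r) * n * (r : ℝ)⁻¹ * (c ^ (r - 1))⁻¹ := by ring

theorem connected_inadmissible_probability_bound_general
    (n r : ℕ) (hr : 2 ≤ r) (Runder : ℝ)
    (Ω : Type) [MeasurableSpace Ω] (μ : Measure Ω)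
    (L : Ω → Fin n → Fin n → ℕ)
    (hsymm : ∀ ω j k, L ω j k = L ω k j)
    (hindep : iIndepFun
      (fun (q : {q : Fin n × Fin n // q.1 ≤ q.2}) ω => L ω q.1.1 q.1.2) μ)
    (hp : ∀ j k, μ {ω | L ω j k = 0} ≤ ENNReal.ofReal (1 / (n * Runder ^ 4))) :
    μ {ω | ∃ s : Finset (Fin n), s.card = r ∧
        ∀ j ∈ s, ∀ k ∈ s, Relation.ReflTransGen (fun a b => L ω a b = 0) j k}
      ≤ ENNReal.ofReal
          (Real.exp (3 * r) * n * (r : ℝ)⁻¹ * (Runder ^ (4 * (r - 1)))⁻¹) := by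
  set p := ENNReal.ofReal (1 / (n * Runder ^ 4))
  -- `(e.inf, e.sup) = Sym2.sortEquiv e` is the upper-triangular position of the edge `e`.
  let link : Sym2 (Fin n) → Set Ω := fun e => {ω | L ω e.inf e.sup = 0}
  have hlink (E : Finset (Sym2 (Fin n))) : μ (⋂ e ∈ E, link e) ≤ p ^ E.card :=
    (hindep.precomp Sym2.sortEquiv.injective).measure_biInter_preimage_le_pow
      (measurableSet_singleton 0) (fun e => hp _ _) E
  let 𝓔 := {E ∈ functionalEdgeSets (Fin n) r | E.card = r - 1}
  have hcover : {ω | ∃ s : Finset (Fin n), s.card = r ∧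
      ∀ j ∈ s, ∀ k ∈ s, Relation.ReflTransGen (fun a b => L ω a b = 0) j k} ⊆
      ⋃ E ∈ 𝓔, ⋂ e ∈ E, link e := by
    rintro ω ⟨s, hs, hconn⟩
    obtain ⟨E, hE, hcard, hrel⟩ := exists_mem_functionalEdgeSets_of_reflTransGen
      (fun a b h => (hsymm ω b a).trans h) hconn (by omega) hs
    refine Set.mem_biUnion (mem_filter.mpr ⟨hE, hcard⟩) (Set.mem_iInter₂.mpr fun e he => ?_)
    exact hrel _ _ (by rwa [show s(e.inf, e.sup) = e from Sym2.sortEquiv.symm_apply_apply e])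
  calc μ _ ≤ μ (⋃ E ∈ 𝓔, ⋂ e ∈ E, link e) := measure_mono hcover
    _ ≤ 𝓔.card * p ^ (r - 1) :=
        measure_biUnion_biInter_le_card_mul_pow hlink 𝓔 fun E hE => (mem_filter.mp hE).2
    _ ≤ (n.choose r * r ^ r : ℕ) * p ^ (r - 1) := by
        gcongr
        simpa using (card_filter_le _ _).trans (card_functionalEdgeSets_le (α := Fin n) r)
    _ ≤ _ := by
        rw [← ENNReal.ofReal_pow (by positivity), ← ENNReal.ofReal_natCast,
          ← ENNReal.ofReal_mul (Nat.cast_nonneg _), pow_mul]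
        exact ENNReal.ofReal_le_ofReal (by
          exact_mod_cast Nat.choose_mul_pow_self_mul_inv_pow_le (by omega) (by positivity))

/-- **Probability of an `r`-connected-inadmissible configuration** (Section 3).  If the
upper-triangular entries of a random symmetric 0/1 matrix `L` are independent with
`P(L_{jk} = 0) ≤ 1/(n R̲⁴)`, then the probability that there exist `r` distinct indices
that are pairwise connected (joined by paths of links, a link between `a` and `b` meaning
`L_{ab} = 0`) is at most `e^{3r} n r⁻¹ R̲^{-4(r-1)}`. -/
theorem connected_inadmissible_probability_bound
    (n r : ℕ) (hn : 2 ≤ n) (hr : 2 ≤ r) (Runder : ℝ) (hR : 0 < Runder)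
    (Ω : Type) [MeasurableSpace Ω] (μ : Measure Ω) [IsProbabilityMeasure μ]
    (L : Ω → Fin n → Fin n → ℕ)
    (hmeas : ∀ j k, Measurable fun ω => L ω j k)
    (h01 : ∀ ω j k, L ω j k = 0 ∨ L ω j k = 1)
    (hsymm : ∀ ω j k, L ω j k = L ω k j)
    (hindep : iIndepFun
      (fun (q : {q : Fin n × Fin n // q.1 ≤ q.2}) ω => L ω q.1.1 q.1.2) μ)
    (hp : ∀ j k, μ {ω | L ω j k = 0} ≤ ENNReal.ofReal (1 / (n * Runder ^ 4))) :
    μ {ω | ∃ s : Finset (Fin n), s.card = r ∧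
        ∀ j ∈ s, ∀ k ∈ s, Relation.ReflTransGen (fun a b => L ω a b = 0) j k}
      ≤ ENNReal.ofReal
          (Real.exp (3 * r) * n * (r : ℝ)⁻¹ * (Runder ^ (4 * (r - 1)))⁻¹) :=
  connected_inadmissible_probability_bound_general n r hr Runder Ω μ L hsymm hindep hp
end
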